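/- arXiv:1110.1741 — 2 statements merged into one kernel-verified Lean document; each statement's English description precedes it below -/
import Mathlib

section
/- Let M be an invertible m×m matrix over ℤ (so det M = ±1) with spectral radius ρ > 1. Then ρ is irrational. -/
/-!
An eigenvalue `λ` of a unimodular integer matrix `M` is an algebraic unit: `λ` is a root of the
characteristic polynomial of `M`, and `λ⁻¹` one of `M⁻¹`, again an integer matrix. Since complex
conjugation preserves integrality, `|λ|² = λ * conj λ` is an algebraic unit as well. If `|λ|` were
rational, `|λ|²` would be a unit of `ℤ`, so `|λ| = 1`, which excludes `ρ > 1`.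
-/

open Polynomial Matrix ComplexConjugate

theorem Matrix.isIntegral_of_mulVec_eq_smul {n R K : Type*} [Fintype n] [DecidableEq n]
    [CommRing R] [CommRing K] [IsDomain K] [Algebra R K] (M : Matrix n n R) {lam : K}
    {v : n → K} (hv : v ≠ 0) (h : M.map (algebraMap R K) *ᵥ v = lam • v) :
    IsIntegral R lam := by
  refine ⟨M.charpoly, M.charpoly_monic, ?_⟩
  rw [eval₂_eq_eval_map, ← charpoly_map, eval_charpoly]
  refine exists_mulVec_eq_zero_iff.mp ⟨v, hv, ?_⟩
  ext i
  simp [sub_mulVec, h]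

theorem Matrix.map_nonsing_inv_mulVec_eq_inv_smul {n R K : Type*} [Fintype n] [DecidableEq n]
    [CommRing R] [Field K] {M : Matrix n n R} (hM : IsUnit M.det) (f : R →+* K) {lam : K}
    {v : n → K} (h : M.map f *ᵥ v = lam • v) : M⁻¹.map f *ᵥ v = lam⁻¹ • v := by
  have key : v = lam • (M⁻¹.map f *ᵥ v) :=
    calc v = (M⁻¹.map f * M.map f) *ᵥ v := by
          rw [← Matrix.map_mul, nonsing_inv_mul _ hM, Matrix.map_one _ f.map_zero f.map_one,
            one_mulVec]
      _ = lam • (M⁻¹.map f *ᵥ v) := by rw [← mulVec_mulVec, h, mulVec_smul]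
  rcases eq_or_ne lam 0 with rfl | hlam
  · rw [zero_smul] at key
    simp [key]
  · conv_rhs => rw [key]
    rw [inv_smul_smul₀ hlam]

theorem IsIntegrallyClosed.exists_isUnit_algebraMap_eq {R K : Type*} [CommRing R] [IsDomain R]
    [IsIntegrallyClosed R] [Field K] [Algebra R K] [IsFractionRing R K] {x : K} (hx0 : x ≠ 0)
    (hx : IsIntegral R x) (hinv : IsIntegral R x⁻¹) :
    ∃ a : R, IsUnit a ∧ algebraMap R K a = x := by
  obtain ⟨a, rfl⟩ := IsIntegrallyClosed.isIntegral_iff.mp hx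
  obtain ⟨b, hb⟩ := IsIntegrallyClosed.isIntegral_iff.mp hinv
  refine ⟨a, IsUnit.of_mul_eq_one b (IsFractionRing.injective R K ?_), rfl⟩
  rw [map_mul, hb, mul_inv_cancel₀ hx0, map_one]

theorem Complex.norm_eq_one_of_isIntegral_of_isIntegral_inv {lam : ℂ} (hlam : lam ≠ 0)
    (h : IsIntegral ℤ lam) (hinv : IsIntegral ℤ lam⁻¹) {q : ℚ} (hq : (q : ℝ) = ‖lam‖) :
    ‖lam‖ = 1 := by
  have hconj : lam * conj lam = algebraMap ℚ ℂ (q ^ 2) := by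
    rw [mul_conj, normSq_eq_norm_sq, ← hq]
    simp
  have hsq : IsIntegral ℤ (q ^ 2) := by
    rw [← isIntegral_algebraMap_iff (algebraMap ℚ ℂ).injective, ← hconj]
    exact h.mul (h.map (starRingEnd ℂ).toIntAlgHom)
  have hsq_inv : IsIntegral ℤ (q ^ 2)⁻¹ := by
    rw [← isIntegral_algebraMap_iff (algebraMap ℚ ℂ).injective, map_inv₀, ← hconj, mul_inv,
      ← map_inv₀]
    exact hinv.mul (hinv.map (starRingEnd ℂ).toIntAlgHom)
  have hq0 : q ≠ 0 := by
    rintro rfl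
    simp [eq_comm, hlam] at hq
  obtain ⟨a, ha, haq⟩ :=
    IsIntegrallyClosed.exists_isUnit_algebraMap_eq (pow_ne_zero 2 hq0) hsq hsq_inv
  have hq2 : q ^ 2 = 1 := by
    rcases Int.isUnit_iff.mp ha with rfl | rfl
    · simpa using haq.symm
    · have : (-1 : ℚ) = q ^ 2 := by simpa using haq
      nlinarith [sq_nonneg q]
  rw [← hq]
  exact (pow_eq_one_iff_of_nonneg (hq ▸ norm_nonneg lam) two_ne_zero).mp (by exact_mod_cast hq2)

/-- If an invertible integer matrix (determinant ±1) has spectral radius `ρ > 1`,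
then `ρ` is irrational. -/
theorem spectral_radius_of_unimodular_irrational {m : ℕ}
    (M : Matrix (Fin m) (Fin m) ℤ) (hdet : M.det = 1 ∨ M.det = -1) (ρ : ℝ)
    (hρ : IsGreatest {r : ℝ | ∃ lam : ℂ,
        (∃ v : Fin m → ℂ, v ≠ 0 ∧ (M.map (Int.cast : ℤ → ℂ)).mulVec v = lam • v) ∧
        ‖lam‖ = r} ρ)
    (hρ1 : 1 < ρ) : Irrational ρ := by
  rintro ⟨q, hq⟩
  obtain ⟨⟨lam, ⟨v, hv, hMv⟩, rfl⟩, -⟩ := hρ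
  have hunit : IsUnit M.det := by rcases hdet with h | h <;> simp [h]
  have hlam0 : lam ≠ 0 := norm_pos_iff.mp (by linarith)
  have hMv_inv := M.map_nonsing_inv_mulVec_eq_inv_smul hunit (algebraMap ℤ ℂ) hMv
  have hnorm := Complex.norm_eq_one_of_isIntegral_of_isIntegral_inv hlam0
    (M.isIntegral_of_mulVec_eq_smul hv hMv) (M⁻¹.isIntegral_of_mulVec_eq_smul hv hMv_inv) hq
  linarith
end

section
/- For n ≥ 0, define χ_n(t) = t^{n+1}(t³ − t − 1) + t³ + t² − 1. Then for n ≥ 7, χ_n has a real root strictly greater than 1. -/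
/-!
Since `χ_n(1) = 0` and `χ_n'(1) = 6 - n`, for `n ≥ 7` the polynomial `χ_n` becomes negative just
to the right of `1`; as `χ_n(2) > 0`, the intermediate value theorem gives a root in `(1, 2)`.
-/

/-- The characteristic polynomial `χ_n(t) = t^{n+1}(t³−t−1) + t³+t²−1`. -/
noncomputable def chi (n : ℕ) (t : ℝ) : ℝ :=
  t ^ (n + 1) * (t ^ 3 - t - 1) + t ^ 3 + t ^ 2 - 1

open Filter Set Topology

theorem HasDerivWithinAt.exists_mem_Ioo_lt_of_neg {f : ℝ → ℝ} {f' a b : ℝ}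
    (hf : HasDerivWithinAt f f' (Ioi a) a) (hf' : f' < 0) (hab : a < b) :
    ∃ c ∈ Ioo a b, f c < f a := by
  have hslope : ∀ᶠ z in 𝓝[>] a, slope f a z < 0 :=
    hf.limsup_slope_le' (lt_irrefl a) hf'
  obtain ⟨c, hc, hcab⟩ := (hslope.and (Ioo_mem_nhdsGT hab)).exists
  refine ⟨c, hcab, ?_⟩
  rw [slope_def_field, div_neg_iff] at hc
  rcases hc with ⟨-, hc⟩ | ⟨hc, -⟩
  · linarith [hcab.1]
  · linarith

theorem exists_mem_Ioo_eq_zero_of_hasDerivWithinAt_neg {f : ℝ → ℝ} {f' a b : ℝ} (hab : a < b)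
    (hf : ContinuousOn f (Icc a b)) (hfa : f a = 0) (hd : HasDerivWithinAt f f' (Ioi a) a)
    (hf' : f' < 0) (hfb : 0 < f b) : ∃ c ∈ Ioo a b, f c = 0 := by
  obtain ⟨z, hz, hfz⟩ := hd.exists_mem_Ioo_lt_of_neg hf' hab
  obtain ⟨c, hc, hfc⟩ := intermediate_value_Ioo hz.2.le
    (hf.mono (Icc_subset_Icc_left hz.1.le)) ⟨hfa ▸ hfz, hfb⟩
  exact ⟨c, ⟨hz.1.trans hc.1, hc.2⟩, hfc⟩

theorem continuous_chi (n : ℕ) : Continuous (chi n) := by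
  unfold chi
  fun_prop

theorem chi_one (n : ℕ) : chi n 1 = 0 := by
  norm_num [chi]

theorem chi_two_pos (n : ℕ) : 0 < chi n 2 := by
  have : (1 : ℝ) ≤ 2 ^ (n + 1) := one_le_pow₀ (by norm_num)
  unfold chi
  nlinarith

theorem hasDerivAt_chi (n : ℕ) (t : ℝ) :
    HasDerivAt (chi n)
      ((n + 1) * t ^ n * (t ^ 3 - t - 1) + t ^ (n + 1) * (3 * t ^ 2 - 1) + 3 * t ^ 2 + 2 * t) t := by
  refine (((((hasDerivAt_pow (n + 1) t).mul
    (((hasDerivAt_pow 3 t).sub (hasDerivAt_id t)).sub_const 1)).add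
    (hasDerivAt_pow 3 t)).add (hasDerivAt_pow 2 t)).sub_const 1).congr_deriv ?_
  simp only [Nat.add_sub_cancel, Pi.sub_apply, id]
  push_cast
  ring

theorem hasDerivAt_chi_one (n : ℕ) : HasDerivAt (chi n) (6 - n) 1 :=
  (hasDerivAt_chi n 1).congr_deriv (by norm_num; ring)

/-- For `n ≥ 7`, `χ_n` has a real root strictly greater than 1. -/
theorem chi_has_root_gt_one (n : ℕ) (hn : 7 ≤ n) :
    ∃ t : ℝ, 1 < t ∧ chi n t = 0 := by
  have hderiv_neg : (6 - n : ℝ) < 0 := by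
    have : (7 : ℝ) ≤ n := by exact_mod_cast hn
    linarith
  obtain ⟨t, ht, hroot⟩ := exists_mem_Ioo_eq_zero_of_hasDerivWithinAt_neg one_lt_two
    (continuous_chi n).continuousOn (chi_one n) (hasDerivAt_chi_one n).hasDerivWithinAt
    hderiv_neg (chi_two_pos n)
  exact ⟨t, ht.1, hroot⟩
end
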